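/- arXiv:2412.07865 — 2 statements merged into one kernel-verified Lean document; each statement's English description precedes it below -/
import Mathlib

section
/- Let P: ℝ^N → ℝ be twice continuously differentiable and δ-strongly convex, V > 0, and g(λ) := argmin_y [V·P(y) - ∑_n λ_n y_n] with interior minimizer. Then every partial derivative of g is bounded: |∂g_k/∂λ_m(λ)| ≤ N/(δV) for all k, m. -/
/-!
Write `w = g μ - g λ`. The first-order condition at the two minimizers gives
`V (∇P(g μ) - ∇P(g λ)) · w = (μ - λ) · w`, while the mean value theorem applied along the segment
from `g λ` to `g μ`, together with `δ`-strong convexity, bounds the left side below by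
`δ V ‖w‖²`. Cauchy–Schwarz then yields `‖w‖ ≤ ‖μ - λ‖ / (δ V)`, so each coordinate of `g` is
`1/(δ V)`-Lipschitz along every coordinate line, and the partial derivatives, where they exist,
are bounded by `1/(δ V) ≤ N/(δ V)`.
-/

section NormedSpace

variable {E : Type*} [NormedAddCommGroup E] [NormedSpace ℝ E]

theorem le_fderiv_sub_fderiv_of_forall_le_fderiv_fderiv {P q : E → ℝ} (hP : ContDiff ℝ 2 P)
    (hq : ∀ y z, q z ≤ fderiv ℝ (fun w => fderiv ℝ P w z) y z) (a b : E) :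
    q (a - b) ≤ fderiv ℝ P a (a - b) - fderiv ℝ P b (a - b) := by
  set z := a - b
  have hD : Differentiable ℝ (fun w => fderiv ℝ P w z) :=
    ((hP.fderiv_right le_rfl).differentiable one_ne_zero).clm_apply (differentiable_const z)
  have hline : ∀ t : ℝ, HasDerivAt (fun t : ℝ => b + t • z) z t := fun t => by
    simpa using ((hasDerivAt_id t).smul_const z).const_add b
  have hderiv : ∀ t : ℝ, HasDerivAt (fun t => fderiv ℝ P (b + t • z) z)
      (fderiv ℝ (fun w => fderiv ℝ P w z) (b + t • z) z) t := fun t =>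
    (hD _).hasFDerivAt.comp_hasDerivAt t (hline t)
  obtain ⟨c, -, hc⟩ := exists_hasDerivAt_eq_slope _ _ zero_lt_one
    (fun t _ => (hderiv t).continuousAt.continuousWithinAt) (fun t _ => hderiv t)
  calc q z ≤ fderiv ℝ (fun w => fderiv ℝ P w z) (b + c • z) z := hq _ z
    _ = fderiv ℝ P a z - fderiv ℝ P b z := by
      rw [hc, one_smul, zero_smul, add_zero, sub_zero, div_one, add_sub_cancel]

theorem smul_fderiv_eq_of_forall_le_sub {P : E → ℝ} {x : E} {V : ℝ} (ℓ : E →L[ℝ] ℝ)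
    (hP : DifferentiableAt ℝ P x) (hmin : ∀ y, V * P x - ℓ x ≤ V * P y - ℓ y) :
    V • fderiv ℝ P x = ℓ := by
  have hmin' : IsLocalMin (fun y => V * P y - ℓ y) x :=
    IsMinOn.isLocalMin (fun y _ => hmin y) Filter.univ_mem
  exact sub_eq_zero.mp (hmin'.hasFDerivAt_eq_zero ((hP.hasFDerivAt.const_mul V).sub ℓ.hasFDerivAt))

theorem abs_fderiv_apply_le_of_abs_sub_le {f : E → ℝ} {x v : E} {C : ℝ} (hC : 0 ≤ C)
    (h : ∀ t : ℝ, |f (x + t • v) - f x| ≤ C * |t|) : |fderiv ℝ f x v| ≤ C := by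
  by_cases hf : DifferentiableAt ℝ f x
  · have hline : HasDerivAt (fun t : ℝ => f (x + t • v)) (fderiv ℝ f x v) 0 := by
      have hf' : HasFDerivAt f (fderiv ℝ f x) (x + (0 : ℝ) • v) := by simpa using hf.hasFDerivAt
      exact hf'.comp_hasDerivAt 0 (by simpa using ((hasDerivAt_id (0 : ℝ)).smul_const v).const_add x)
    rw [← hline.deriv, ← Real.norm_eq_abs]
    refine norm_deriv_le_of_lip' hC (Filter.Eventually.of_forall fun t => ?_)
    simpa using h t
  · simpa [fderiv_zero_of_not_differentiableAt hf] using hC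

end NormedSpace

theorem Real.sqrt_sum_sq_le_div_of_mul_sum_sq_le {ι : Type*} (s : Finset ι) {c : ℝ} (hc : 0 < c)
    {u w : ι → ℝ} (h : c * ∑ i ∈ s, w i ^ 2 ≤ ∑ i ∈ s, u i * w i) :
    √(∑ i ∈ s, w i ^ 2) ≤ √(∑ i ∈ s, u i ^ 2) / c := by
  set W := √(∑ i ∈ s, w i ^ 2)
  have hW : W ^ 2 = ∑ i ∈ s, w i ^ 2 := Real.sq_sqrt (Finset.sum_nonneg fun i _ => sq_nonneg _)
  have hcs : c * W * W ≤ √(∑ i ∈ s, u i ^ 2) * W := by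
    calc c * W * W = c * ∑ i ∈ s, w i ^ 2 := by rw [← hW]; ring
      _ ≤ ∑ i ∈ s, u i * w i := h
      _ ≤ √(∑ i ∈ s, u i ^ 2) * W := Real.sum_mul_le_sqrt_mul_sqrt s u w
  rw [le_div_iff₀ hc, mul_comm]
  rcases (Real.sqrt_nonneg _ : 0 ≤ W).eq_or_lt with hW0 | hWpos
  · rw [← show (0 : ℝ) = W from hW0, mul_zero]
    exact Real.sqrt_nonneg _
  · exact le_of_mul_le_mul_right hcs hWpos

section Argmin

variable {N : ℕ} {P : (Fin N → ℝ) → ℝ} {δ V : ℝ} {g : (Fin N → ℝ) → (Fin N → ℝ)}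

theorem mul_fderiv_argmin_apply (hP : Differentiable ℝ P)
    (hmin : ∀ lam y : Fin N → ℝ,
      V * P (g lam) - ∑ n, lam n * g lam n ≤ V * P y - ∑ n, lam n * y n)
    (lam z : Fin N → ℝ) :
    V * fderiv ℝ P (g lam) z = ∑ n, lam n * z n := by
  have h := smul_fderiv_eq_of_forall_le_sub (∑ n, lam n • ContinuousLinearMap.proj n) (hP (g lam))
    (by simpa using hmin lam)
  simpa using congrArg (fun ℓ : (Fin N → ℝ) →L[ℝ] ℝ => ℓ z) h

theorem mul_sum_sq_argmin_sub_le (hV : 0 < V) (hP : ContDiff ℝ 2 P)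
    (hSC : ∀ y z : Fin N → ℝ,
      δ * ∑ i, (z i) ^ 2 ≤ fderiv ℝ (fun w => fderiv ℝ P w z) y z)
    (hmin : ∀ lam y : Fin N → ℝ,
      V * P (g lam) - ∑ n, lam n * g lam n ≤ V * P y - ∑ n, lam n * y n)
    (lam mu : Fin N → ℝ) :
    δ * V * ∑ i, (g mu i - g lam i) ^ 2 ≤ ∑ i, (mu i - lam i) * (g mu i - g lam i) := by
  set w := g mu - g lam
  have hmono := le_fderiv_sub_fderiv_of_forall_le_fderiv_fderiv hP hSC (g mu) (g lam)
  have hfoc := mul_fderiv_argmin_apply (hP.differentiable two_ne_zero) hmin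
  calc δ * V * ∑ i, (g mu i - g lam i) ^ 2 = V * (δ * ∑ i, w i ^ 2) := by
        simp only [w, Pi.sub_apply]; ring
    _ ≤ V * (fderiv ℝ P (g mu) w - fderiv ℝ P (g lam) w) := by gcongr
    _ = ∑ i, (mu i - lam i) * w i := by
      rw [mul_sub, hfoc, hfoc, ← Finset.sum_sub_distrib]
      simp only [sub_mul]
    _ = ∑ i, (mu i - lam i) * (g mu i - g lam i) := rfl

theorem abs_argmin_sub_le (hδ : 0 < δ) (hV : 0 < V) (hP : ContDiff ℝ 2 P)
    (hSC : ∀ y z : Fin N → ℝ,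
      δ * ∑ i, (z i) ^ 2 ≤ fderiv ℝ (fun w => fderiv ℝ P w z) y z)
    (hmin : ∀ lam y : Fin N → ℝ,
      V * P (g lam) - ∑ n, lam n * g lam n ≤ V * P y - ∑ n, lam n * y n)
    (lam mu : Fin N → ℝ) (k : Fin N) :
    |g mu k - g lam k| ≤ √(∑ i, (mu i - lam i) ^ 2) / (δ * V) :=
  (Real.abs_le_sqrt (Finset.single_le_sum (fun i _ => sq_nonneg (g mu i - g lam i))
    (Finset.mem_univ k))).trans
    (Real.sqrt_sum_sq_le_div_of_mul_sum_sq_le _ (mul_pos hδ hV)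
      (mul_sum_sq_argmin_sub_le hV hP hSC hmin lam mu))

theorem abs_fderiv_argmin_apply_le (hδ : 0 < δ) (hV : 0 < V) (hP : ContDiff ℝ 2 P)
    (hSC : ∀ y z : Fin N → ℝ,
      δ * ∑ i, (z i) ^ 2 ≤ fderiv ℝ (fun w => fderiv ℝ P w z) y z)
    (hmin : ∀ lam y : Fin N → ℝ,
      V * P (g lam) - ∑ n, lam n * g lam n ≤ V * P y - ∑ n, lam n * y n)
    (lam v : Fin N → ℝ) (k : Fin N) :
    |fderiv ℝ (fun l => g l k) lam v| ≤ √(∑ i, v i ^ 2) / (δ * V) := by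
  refine abs_fderiv_apply_le_of_abs_sub_le (by positivity) fun t => ?_
  have hline : √(∑ i, ((lam + t • v) i - lam i) ^ 2) = |t| * √(∑ i, v i ^ 2) := by
    simp only [Pi.add_apply, Pi.smul_apply, smul_eq_mul, add_sub_cancel_left, mul_pow,
      ← Finset.mul_sum]
    rw [Real.sqrt_mul (sq_nonneg t), Real.sqrt_sq_eq_abs]
  calc |g (lam + t • v) k - g lam k| ≤ |t| * √(∑ i, v i ^ 2) / (δ * V) := by
        rw [← hline]; exact abs_argmin_sub_le hδ hV hP hSC hmin lam _ k
    _ = √(∑ i, v i ^ 2) / (δ * V) * |t| := by ring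

end Argmin

/-- For `P : ℝ^N → ℝ` twice continuously differentiable and `δ`-strongly convex, `V > 0`,
and `g λ := argmin_y (V P(y) - ∑ λ_n y_n)`, every partial derivative of `g` is bounded:
`|∂g_k/∂λ_m| ≤ N/(δ V)`. -/
theorem stmt10 (N : ℕ) (P : (Fin N → ℝ) → ℝ) (δ V : ℝ) (hδ : 0 < δ) (hV : 0 < V)
    (hP : ContDiff ℝ 2 P)
    (hSC : ∀ y z : Fin N → ℝ,
      δ * ∑ i, (z i) ^ 2 ≤ fderiv ℝ (fun w => fderiv ℝ P w z) y z)
    (g : (Fin N → ℝ) → (Fin N → ℝ))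
    (hmin : ∀ lam y : Fin N → ℝ,
      V * P (g lam) - ∑ n, lam n * g lam n ≤ V * P y - ∑ n, lam n * y n) :
    ∀ (lam : Fin N → ℝ) (k m : Fin N),
      |fderiv ℝ (fun l => g l k) lam (Pi.single m 1)| ≤ N / (δ * V) := by
  intro lam k m
  have hN : (1 : ℝ) ≤ N := by exact_mod_cast k.pos
  calc |fderiv ℝ (fun l => g l k) lam (Pi.single m 1)|
      ≤ √(∑ i, (Pi.single m 1 : Fin N → ℝ) i ^ 2) / (δ * V) :=
        abs_fderiv_argmin_apply_le hδ hV hP hSC hmin lam _ k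
    _ = 1 / (δ * V) := by
      rw [Finset.sum_eq_single m (fun i _ hi => by simp [hi]) (by simp)]
      simp
    _ ≤ N / (δ * V) := by gcongr
end

section
/- Let f and f̂ be probability distributions over finitely many states, g_s(λ) the minimizer of V·P_s(y) - ∑_n λ_n(y_n - A_n) with each P_s δ-strongly convex and twice continuously differentiable. Suppose λ* satisfies ∑_s f_s g_{n,s}(λ*) = A_n and λ̂* satisfies ∑_s f̂_s g_{n,s}(λ̂*) = A_n for all n. Define d_n := ∑_s (f_s - f̂_s) g_{n,s}(λ*) and Ĥ with entries ĥ_{n,m} = ∑_s f̂_s ∂g_{m,s}(λ*)/∂λ_n, assumed invertible. Then λ̂* = λ* + Ĥ⁻¹ d + O(∑_s (f_s - f̂_s)²). -/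
/-!
Stationarity of the minimizer gives `V ∇P_s(g_s λ) = λ`; differentiating,
`V ∇²P_s(g_s λ) ∘ Dg_s(λ) = I`. Hence each `Dg_s(λ)` is symmetric, and it is coercive with
constant `δ / (V B²)` wherever `‖∇²P_s(g_s λ)‖ ≤ B`.

Testing the minimality of `g_s(λ̂*)` against a point in the direction of `λ̂* - λ*` shows that
the multipliers `λ̂*` of all distributions `f̂` lie in one ball around `λ*`. On that ball
`F = ∑_s f̂_s g_s` is uniformly strongly monotone, and `F(λ̂*) - F(λ*) = d`, so
`|λ̂* - λ*| ≤ |d| / c = O(|f - f̂|)`. Taylor's formula `d = Ĥ (λ̂* - λ*) + O(|λ̂* - λ*|²)`,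
with `Ĥ` coercive as well, then gives `|λ̂* - λ* - Ĥ⁻¹ d| = O(|d|²) = O(∑_s (f_s - f̂_s)²)`.
-/

open Matrix Finset Set

section DotProduct

variable {ι : Type*} [Fintype ι]

lemma dotProduct_self_nonneg (x : ι → ℝ) : 0 ≤ x ⬝ᵥ x :=
  sum_nonneg fun i _ => mul_self_nonneg (x i)

lemma norm_sq_le_dotProduct_self (x : ι → ℝ) : ‖x‖ ^ 2 ≤ x ⬝ᵥ x := by
  have hx := dotProduct_self_nonneg x
  have hle : ‖x‖ ≤ √(x ⬝ᵥ x) := (pi_norm_le_iff_of_nonneg (Real.sqrt_nonneg _)).2 fun i => by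
    rw [Real.norm_eq_abs, Real.le_sqrt (abs_nonneg _) hx, sq_abs, sq]
    exact single_le_sum (f := fun i => x i * x i) (fun i _ => mul_self_nonneg (x i)) (mem_univ i)
  calc ‖x‖ ^ 2 ≤ √(x ⬝ᵥ x) ^ 2 := by gcongr
    _ = x ⬝ᵥ x := Real.sq_sqrt hx

lemma dotProduct_self_le_card_mul_norm_sq (x : ι → ℝ) :
    x ⬝ᵥ x ≤ Fintype.card ι * ‖x‖ ^ 2 := by
  calc x ⬝ᵥ x = ∑ i, ‖x i‖ ^ 2 := by simp [dotProduct, sq]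
    _ ≤ ∑ _i : ι, ‖x‖ ^ 2 := sum_le_sum fun i _ => by gcongr; exact norm_le_pi_norm x i
    _ = Fintype.card ι * ‖x‖ ^ 2 := by simp

lemma dotProduct_le_norm_mul_sum_abs (x y : ι → ℝ) : x ⬝ᵥ y ≤ ‖x‖ * ∑ i, |y i| := by
  rw [mul_sum]
  refine sum_le_sum fun i _ => ?_
  calc x i * y i ≤ |x i| * |y i| := by rw [← abs_mul]; exact le_abs_self _
    _ ≤ ‖x‖ * |y i| := by gcongr; exact norm_le_pi_norm x i

/-- Cauchy–Schwarz: `c |x|² ≤ x ⬝ᵥ y ≤ |x| |y|`. -/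
lemma sq_mul_dotProduct_self_le {c : ℝ} (hc : 0 ≤ c) {x y : ι → ℝ}
    (h : c * (x ⬝ᵥ x) ≤ x ⬝ᵥ y) : c ^ 2 * (x ⬝ᵥ x) ≤ y ⬝ᵥ y := by
  have cs : (x ⬝ᵥ y) ^ 2 ≤ (x ⬝ᵥ x) * (y ⬝ᵥ y) := by
    simpa [dotProduct, sq] using sum_mul_sq_le_sq_mul_sq univ x y
  rcases (dotProduct_self_nonneg x).eq_or_lt with h0 | hpos
  · rw [← h0, mul_zero]; exact dotProduct_self_nonneg y
  · have h2 : (c * (x ⬝ᵥ x)) ^ 2 ≤ (x ⬝ᵥ y) ^ 2 := pow_le_pow_left₀ (by positivity) h 2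
    refine le_of_mul_le_mul_left ?_ hpos
    nlinarith

end DotProduct

section Calculus

variable {E F : Type*} [NormedAddCommGroup E] [NormedSpace ℝ E] [NormedAddCommGroup F]
  [NormedSpace ℝ F]

lemma norm_sub_sub_fderiv_le {f : E → F} {M : ℝ} (hf : ContDiff ℝ 2 f)
    (hM : ∀ z, ‖fderiv ℝ (fderiv ℝ f) z‖ ≤ M) (x y : E) :
    ‖f y - f x - fderiv ℝ f x (y - x)‖ ≤ M * ‖y - x‖ ^ 2 := by
  have hf' : Differentiable ℝ (fderiv ℝ f) :=
    (hf.fderiv_right (m := 1) le_rfl).differentiable one_ne_zero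
  have hM0 : 0 ≤ M := (norm_nonneg (fderiv ℝ (fderiv ℝ f) x)).trans (hM x)
  have hlip : ∀ z ∈ Metric.closedBall x ‖y - x‖,
      ‖fderiv ℝ f z - fderiv ℝ f x‖ ≤ M * ‖y - x‖ := fun z hz =>
    calc ‖fderiv ℝ f z - fderiv ℝ f x‖ ≤ M * ‖z - x‖ :=
          convex_univ.norm_image_sub_le_of_norm_fderiv_le (fun w _ => hf' w) (fun w _ => hM w)
            (mem_univ x) (mem_univ z)
      _ ≤ M * ‖y - x‖ := by gcongr; exact mem_closedBall_iff_norm.1 hz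
  calc ‖f y - f x - fderiv ℝ f x (y - x)‖ ≤ M * ‖y - x‖ * ‖y - x‖ :=
        (convex_closedBall x _).norm_image_sub_le_of_norm_fderiv_le'
          (fun z _ => (hf.differentiable two_ne_zero) z) hlip
          (Metric.mem_closedBall_self (norm_nonneg _)) (by simp [dist_eq_norm])
    _ = M * ‖y - x‖ ^ 2 := by ring

lemma fderiv_sum_smul {S : Type*} [Fintype S] {g : S → E → F} (w : S → ℝ)
    (hg : ∀ s, Differentiable ℝ (g s)) :
    fderiv ℝ (fun x => ∑ s, w s • g s x) = fun x => ∑ s, w s • fderiv ℝ (g s) x := by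
  funext x
  rw [fderiv_fun_sum (A := fun s x => w s • g s x) fun s _ => (hg s x).const_smul (w s)]
  exact sum_congr rfl fun s _ => fderiv_fun_const_smul (hg s x) (w s)

end Calculus

lemma IsCompact.exists_pos_forall_norm_le {X G S : Type*} [TopologicalSpace X]
    [SeminormedAddCommGroup G] [Fintype S] {K : Set X} (hK : IsCompact K) {φ : S → X → G}
    (hφ : ∀ s, ContinuousOn (φ s) K) : ∃ B, 0 < B ∧ ∀ s, ∀ x ∈ K, ‖φ s x‖ ≤ B := by
  choose C hC using fun s => hK.exists_bound_of_continuousOn (hφ s)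
  refine ⟨∑ s, |C s| + 1, by positivity, fun s x hx => (hC s x hx).trans ?_⟩
  calc C s ≤ |C s| := le_abs_self _
    _ ≤ ∑ s, |C s| := single_le_sum (fun s _ => abs_nonneg (C s)) (mem_univ s)
    _ ≤ ∑ s, |C s| + 1 := le_add_of_nonneg_right zero_le_one

lemma le_dotProduct_sub_of_le_fderiv {ι : Type*} [Fintype ι] {F : (ι → ℝ) → ι → ℝ}
    (hF : Differentiable ℝ F) (x y : ι → ℝ) {κ : ℝ}
    (h : ∀ z ∈ segment ℝ x y, κ ≤ (y - x) ⬝ᵥ fderiv ℝ F z (y - x)) :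
    κ ≤ (y - x) ⬝ᵥ (F y - F x) := by
  let ℓ := LinearMap.toContinuousLinearMap (dotProductBilin ℝ ℝ (y - x))
  have hline : ∀ t : ℝ, HasDerivAt (fun t : ℝ => x + t • (y - x)) (y - x) t := fun t => by
    simpa using ((hasDerivAt_id t).smul_const (y - x)).const_add x
  have hderiv : ∀ t : ℝ, HasDerivAt (fun t => ℓ (F (x + t • (y - x))))
      (ℓ (fderiv ℝ F (x + t • (y - x)) (y - x))) t := fun t =>
    ℓ.hasFDerivAt.comp_hasDerivAt t ((hF _).hasFDerivAt.comp_hasDerivAt t (hline t))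
  obtain ⟨t, ht, hslope⟩ := exists_hasDerivAt_eq_slope _ _ zero_lt_one
    (fun t _ => (hderiv t).continuousAt.continuousWithinAt) fun t _ => hderiv t
  have hz : x + t • (y - x) ∈ segment ℝ x y := by
    rw [segment_eq_image']
    exact ⟨t, Ioo_subset_Icc_self ht, rfl⟩
  simp only [ℓ, LinearMap.coe_toContinuousLinearMap', dotProductBilin_apply_apply, zero_smul,
    add_zero, one_smul, add_sub_cancel, sub_zero, div_one] at hslope
  rw [dotProduct_sub, ← hslope]
  exact h _ hz

section WeightedSum

variable {S : Type*} [Fintype S] {w : S → ℝ}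

lemma norm_sum_smul_le {G : Type*} [SeminormedAddCommGroup G] [NormedSpace ℝ G] {v : S → G}
    {M : ℝ} (hw : ∀ s, 0 ≤ w s) (hw1 : ∑ s, w s = 1) (hv : ∀ s, ‖v s‖ ≤ M) :
    ‖∑ s, w s • v s‖ ≤ M := by
  refine (norm_sum_le _ _).trans ?_
  calc ∑ s, ‖w s • v s‖ ≤ ∑ s, w s * M := by
        gcongr with s
        rw [norm_smul, Real.norm_of_nonneg (hw s)]
        exact mul_le_mul_of_nonneg_left (hv s) (hw s)
    _ = M := by rw [← sum_mul, hw1, one_mul]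

lemma norm_sum_smul_sub_sub_fderiv_le {E F : Type*} [NormedAddCommGroup E] [NormedSpace ℝ E]
    [NormedAddCommGroup F] [NormedSpace ℝ F] {g : S → E → F} {M : ℝ} (hw : ∀ s, 0 ≤ w s)
    (hw1 : ∑ s, w s = 1) (hg : ∀ s, ContDiff ℝ 2 (g s))
    (hM : ∀ s z, ‖fderiv ℝ (fderiv ℝ (g s)) z‖ ≤ M) (x y : E) :
    ‖∑ s, w s • g s y - ∑ s, w s • g s x - fderiv ℝ (fun x => ∑ s, w s • g s x) x (y - x)‖
      ≤ M * ‖y - x‖ ^ 2 := by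
  rw [fderiv_sum_smul w fun s => (hg s).differentiable two_ne_zero]
  have hsplit : ∑ s, w s • g s y - ∑ s, w s • g s x - (∑ s, w s • fderiv ℝ (g s) x) (y - x) =
      ∑ s, w s • (g s y - g s x - fderiv ℝ (g s) x (y - x)) := by
    simp [smul_sub, sum_sub_distrib]
  rw [hsplit]
  exact norm_sum_smul_le hw hw1 fun s => norm_sub_sub_fderiv_le (hg s) (hM s) x y

variable {ι : Type*} [Fintype ι] {g : S → (ι → ℝ) → ι → ℝ}

lemma dotProduct_fderiv_sum_smul (hg : ∀ s, Differentiable ℝ (g s)) (x a b : ι → ℝ) :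
    a ⬝ᵥ fderiv ℝ (fun x => ∑ s, w s • g s x) x b = ∑ s, w s * (a ⬝ᵥ fderiv ℝ (g s) x b) := by
  simp [fderiv_sum_smul w hg, dotProduct_sum, dotProduct_smul]

lemma mulVec_eq_fderiv_sum_smul [DecidableEq ι] {H : Matrix ι ι ℝ} {x : ι → ℝ}
    (hg : ∀ s, Differentiable ℝ (g s))
    (hsymm : ∀ s a b, a ⬝ᵥ fderiv ℝ (g s) x b = b ⬝ᵥ fderiv ℝ (g s) x a)
    (hH : ∀ n m, H n m = ∑ s, w s * fderiv ℝ (fun l => g s l m) x (Pi.single n 1))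
    (v : ι → ℝ) : H *ᵥ v = fderiv ℝ (fun x => ∑ s, w s • g s x) x v := by
  ext n
  rw [← single_one_dotProduct n (fderiv ℝ _ x v), dotProduct_fderiv_sum_smul hg]
  simp only [hsymm _ (Pi.single n 1) v]
  simp only [mulVec, dotProduct, hH, fderiv_apply (hg _ x),
    ContinuousLinearMap.comp_apply, ContinuousLinearMap.proj_apply, sum_mul, mul_sum]
  rw [sum_comm]
  exact sum_congr rfl fun s _ => sum_congr rfl fun m _ => by ring

lemma dotProduct_self_sum_mul_le (a : S → ℝ) (b : S → ι → ℝ) :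
    (fun n => ∑ s, a s * b s n) ⬝ᵥ (fun n => ∑ s, a s * b s n) ≤
      (∑ s, a s ^ 2) * ∑ n, ∑ s, b s n ^ 2 := by
  rw [mul_sum]
  exact sum_le_sum fun n _ => by simpa [sq] using sum_mul_sq_le_sq_mul_sq univ a (b · n)

end WeightedSum

section Lagrangian

variable {ι : Type*} [Fintype ι] {V : ℝ} {p : (ι → ℝ) → ℝ} {G : (ι → ℝ) → ι → ℝ}

/-- The Lagrangian `V p y - l ⬝ᵥ (y - A)` of the paper, up to the constant `l ⬝ᵥ A`. -/
def MinimizesLagrangian (V : ℝ) (p : (ι → ℝ) → ℝ) (G : (ι → ℝ) → ι → ℝ) : Prop :=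
  ∀ l y, V * p (G l) - l ⬝ᵥ G l ≤ V * p y - l ⬝ᵥ y

lemma minimizesLagrangian_of_le (A : ι → ℝ)
    (h : ∀ l y, V * p (G l) - ∑ n, l n * (G l n - A n) ≤ V * p y - ∑ n, l n * (y n - A n)) :
    MinimizesLagrangian V p G := fun l y => by
  have := h l y
  simp only [mul_sub, sum_sub_distrib] at this
  simp only [dotProduct]
  linarith

namespace MinimizesLagrangian

lemma mul_fderiv_apply (h : MinimizesLagrangian V p G) (l : ι → ℝ)
    (hp : DifferentiableAt ℝ p (G l)) (w : ι → ℝ) : V * fderiv ℝ p (G l) w = l ⬝ᵥ w := by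
  let ℓ := LinearMap.toContinuousLinearMap (dotProductBilin ℝ ℝ l)
  have hloc : IsLocalMin (fun y => V * p y - ℓ y) (G l) := Filter.Eventually.of_forall (h l)
  have := congrArg (· w) (hloc.hasFDerivAt_eq_zero ((hp.hasFDerivAt.const_mul V).sub ℓ.hasFDerivAt))
  simpa [sub_eq_zero, ℓ] using this

lemma mul_fderiv_fderiv_apply (h : MinimizesLagrangian V p G) (hp : ContDiff ℝ 2 p)
    (hG : Differentiable ℝ G) (μ v w : ι → ℝ) :
    V * fderiv ℝ (fderiv ℝ p) (G μ) (fderiv ℝ G μ v) w = v ⬝ᵥ w := by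
  have hp' : Differentiable ℝ (fderiv ℝ p) :=
    (hp.fderiv_right (m := 1) le_rfl).differentiable one_ne_zero
  let ℓ := LinearMap.toContinuousLinearMap (dotProductBilin ℝ ℝ w)
  have hstat : (fun l => V * fderiv ℝ p (G l) w) = fun l => ℓ l := funext fun l => by
    rw [h.mul_fderiv_apply l ((hp.differentiable two_ne_zero) _) w, dotProduct_comm]; rfl
  have hL : HasFDerivAt (fun l => V * fderiv ℝ p (G l) w)
      (V • ((ContinuousLinearMap.apply ℝ ℝ w).comp
        ((fderiv ℝ (fderiv ℝ p) (G μ)).comp (fderiv ℝ G μ)))) μ :=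
    ((ContinuousLinearMap.apply ℝ ℝ w).hasFDerivAt.comp μ
    ((hp' (G μ)).hasFDerivAt.comp μ (hG μ).hasFDerivAt)).const_mul V
  rw [hstat] at hL
  have := congrArg (· v) (hL.unique ℓ.hasFDerivAt)
  simpa [ℓ, dotProduct_comm] using this

lemma dotProduct_fderiv_comm (h : MinimizesLagrangian V p G) (hp : ContDiff ℝ 2 p)
    (hG : Differentiable ℝ G) (μ a b : ι → ℝ) :
    a ⬝ᵥ fderiv ℝ G μ b = b ⬝ᵥ fderiv ℝ G μ a := by
  rw [← h.mul_fderiv_fderiv_apply hp hG μ a, ← h.mul_fderiv_fderiv_apply hp hG μ b,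
    hp.contDiffAt.isSymmSndFDerivAt (by simp)]

/-- `J = DG(μ) v` satisfies `V ∇²p(J, ·) = v ⬝ᵥ ·`. Testing with `J` gives
`v ⬝ᵥ J ≥ V δ |J|²`, testing with `v` gives `|v| ≤ V B |J|`. -/
lemma mul_dotProduct_self_le {δ B : ℝ} (h : MinimizesLagrangian V p G) (hV : 0 < V)
    (hδ : 0 ≤ δ) (hB : 0 < B) (hp : ContDiff ℝ 2 p) (hG : Differentiable ℝ G)
    (hconv : ∀ y z, δ * (z ⬝ᵥ z) ≤ fderiv ℝ (fderiv ℝ p) y z z) {μ : ι → ℝ}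
    (hμ : ‖fderiv ℝ (fderiv ℝ p) (G μ)‖ ≤ B) (v : ι → ℝ) :
    δ / (V * B ^ 2) * (v ⬝ᵥ v) ≤ v ⬝ᵥ fderiv ℝ G μ v := by
  set J := fderiv ℝ G μ v
  set D := fderiv ℝ (fderiv ℝ p) (G μ)
  have hJJ : V * δ * (J ⬝ᵥ J) ≤ v ⬝ᵥ J := by
    rw [← h.mul_fderiv_fderiv_apply hp hG μ v J, mul_assoc]
    exact mul_le_mul_of_nonneg_left (hconv _ J) hV.le
  have hDJv : |V * D J v| ≤ V * (B * ‖J‖ * ‖v‖) := by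
    rw [abs_mul, abs_of_pos hV, ← Real.norm_eq_abs]
    gcongr
    exact (D.le_opNorm₂ J v).trans (by gcongr)
  have hvv : (v ⬝ᵥ v) * (v ⬝ᵥ v) ≤ (V * B) ^ 2 * (J ⬝ᵥ J) * (v ⬝ᵥ v) :=
    calc (v ⬝ᵥ v) * (v ⬝ᵥ v) = |V * D J v| ^ 2 := by
          rw [sq_abs, ← h.mul_fderiv_fderiv_apply hp hG μ v v, sq]
      _ ≤ (V * (B * ‖J‖ * ‖v‖)) ^ 2 := pow_le_pow_left₀ (abs_nonneg _) hDJv 2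
      _ = (V * B) ^ 2 * ‖J‖ ^ 2 * ‖v‖ ^ 2 := by ring
      _ ≤ (V * B) ^ 2 * (J ⬝ᵥ J) * (v ⬝ᵥ v) := by
          gcongr
          · exact mul_nonneg (sq_nonneg _) (dotProduct_self_nonneg J)
          exacts [norm_sq_le_dotProduct_self J, norm_sq_le_dotProduct_self v]
  rcases (dotProduct_self_nonneg v).eq_or_lt with h0 | hpos
  · rw [← h0, mul_zero]
    exact (mul_nonneg (by positivity) (dotProduct_self_nonneg J)).trans hJJ
  · calc δ / (V * B ^ 2) * (v ⬝ᵥ v) ≤ δ / (V * B ^ 2) * ((V * B) ^ 2 * (J ⬝ᵥ J)) := by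
          gcongr; exact le_of_mul_le_mul_right hvv hpos
      _ = V * δ * (J ⬝ᵥ J) := by field_simp
      _ ≤ v ⬝ᵥ J := hJJ

end MinimizesLagrangian

lemma exists_norm_sub_le_of_minimizesLagrangian {S : Type*} [Fintype S]
    {P : S → (ι → ℝ) → ℝ} {g : S → (ι → ℝ) → ι → ℝ} (hP : ∀ s, Continuous (P s))
    (hmin : ∀ s, MinimizesLagrangian V (P s) (g s)) (lam A : ι → ℝ) :
    ∃ R, ∀ (w : S → ℝ) (lamhat : ι → ℝ), (∀ s, 0 ≤ w s) → ∑ s, w s = 1 →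
      ∑ s, w s • g s lamhat = A → ‖lamhat - lam‖ ≤ R := by
  set γ := ∑ i, |A i| + 1
  let excess : S → (ι → ℝ) → ℝ := fun s y =>
    (V * P s y - lam ⬝ᵥ y) - (V * P s (g s lam) - lam ⬝ᵥ g s lam)
  obtain ⟨R, hR⟩ := (isCompact_closedBall (0 : ι → ℝ) γ).exists_bound_of_continuousOn
    (f := fun y => ∑ s, excess s y) (by fun_prop)
  have hexcess : ∀ s, ∀ y ∈ Metric.closedBall (0 : ι → ℝ) γ, excess s y ≤ R := fun s y hy =>
    calc excess s y ≤ ∑ s, excess s y :=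
          single_le_sum (fun s _ => sub_nonneg.2 (hmin s lam y)) (mem_univ s)
      _ ≤ R := (le_abs_self _).trans (hR y hy)
  refine ⟨R, fun w lamhat hw hw1 hA => ?_⟩
  set Δ := lamhat - lam
  rcases eq_or_ne ‖Δ‖ 0 with h0 | hΔ
  · rw [h0]
    exact (norm_nonneg _).trans (hR 0 (Metric.mem_closedBall_self (by positivity)))
  set y := (γ / ‖Δ‖) • Δ
  have hy : y ∈ Metric.closedBall (0 : ι → ℝ) γ := by
    rw [mem_closedBall_zero_iff, norm_smul, Real.norm_eq_abs, abs_of_nonneg (by positivity),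
      div_mul_cancel₀ _ hΔ]
  have hstate : ∀ s, Δ ⬝ᵥ y - Δ ⬝ᵥ g s lamhat ≤ R := fun s => by
    have h1 := hmin s lamhat y
    have h2 := hmin s lam (g s lamhat)
    have h3 := hexcess s y hy
    have hsplit : ∀ z, lamhat ⬝ᵥ z = lam ⬝ᵥ z + Δ ⬝ᵥ z := fun z => by
      rw [← add_dotProduct, add_sub_cancel]
    rw [hsplit, hsplit] at h1
    dsimp only [excess] at h3
    linarith
  have havg : Δ ⬝ᵥ y - Δ ⬝ᵥ A ≤ R := by
    have := (convex_Iic R).sum_mem (t := univ) (fun s _ => hw s) hw1 fun s _ => hstate s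
    simpa [← hA, dotProduct_sum, dotProduct_smul, mul_sub, ← sum_mul, hw1] using this
  have hy_dot : γ * ‖Δ‖ ≤ Δ ⬝ᵥ y := by
    rw [dotProduct_smul, smul_eq_mul]
    calc γ * ‖Δ‖ = γ / ‖Δ‖ * ‖Δ‖ ^ 2 := by field_simp
      _ ≤ γ / ‖Δ‖ * (Δ ⬝ᵥ Δ) := by gcongr; exact norm_sq_le_dotProduct_self Δ
  have hA_dot := dotProduct_le_norm_mul_sum_abs Δ A
  linarith

lemma exists_pos_forall_mul_dotProduct_self_le {S : Type*} [Fintype S] {δ : ℝ}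
    {P : S → (ι → ℝ) → ℝ} {g : S → (ι → ℝ) → ι → ℝ} (hV : 0 < V) (hδ : 0 < δ)
    (hP : ∀ s, ContDiff ℝ 2 (P s))
    (hconv : ∀ s y z, δ * (z ⬝ᵥ z) ≤ fderiv ℝ (fderiv ℝ (P s)) y z z)
    (hmin : ∀ s, MinimizesLagrangian V (P s) (g s)) (hg : ∀ s, Differentiable ℝ (g s))
    {K : Set (ι → ℝ)} (hK : IsCompact K) :
    ∃ c > 0, ∀ s, ∀ μ ∈ K, ∀ v, c * (v ⬝ᵥ v) ≤ v ⬝ᵥ fderiv ℝ (g s) μ v := by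
  obtain ⟨B, hB0, hB⟩ := hK.exists_pos_forall_norm_le
    (φ := fun s μ => fderiv ℝ (fderiv ℝ (P s)) (g s μ)) fun s => by
      exact ((((hP s).fderiv_right (m := 1) le_rfl).continuous_fderiv one_ne_zero).comp
        (hg s).continuous).continuousOn
  exact ⟨δ / (V * B ^ 2), by positivity, fun s μ hμ =>
    (hmin s).mul_dotProduct_self_le hV hδ.le hB0 (hP s) (hg s) (hconv s) (hB s μ hμ)⟩

end Lagrangian

section Perturbation

variable {ι : Type*} [Fintype ι] [DecidableEq ι]

lemma norm_sub_inv_mulVec_sq_le {H : Matrix ι ι ℝ} {Δ d : ι → ℝ} {c M : ℝ} (hc : 0 < c)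
    (hdet : IsUnit H.det) (hH : ∀ v, c * (v ⬝ᵥ v) ≤ v ⬝ᵥ H *ᵥ v)
    (hΔ : c * (Δ ⬝ᵥ Δ) ≤ Δ ⬝ᵥ d) (hr : ‖d - H *ᵥ Δ‖ ≤ M * ‖Δ‖ ^ 2) :
    ‖Δ - H⁻¹ *ᵥ d‖ ^ 2 ≤ Fintype.card ι * M ^ 2 * (d ⬝ᵥ d) ^ 2 / c ^ 6 := by
  set r := d - H *ᵥ Δ
  set u := Δ - H⁻¹ *ᵥ d
  have hHu : H *ᵥ u = -r := by
    simp [u, r, mulVec_sub, mulVec_mulVec, mul_nonsing_inv _ hdet]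
  have hu : c ^ 2 * (u ⬝ᵥ u) ≤ r ⬝ᵥ r := by
    simpa [hHu] using sq_mul_dotProduct_self_le hc.le (hH u)
  have hΔd : c ^ 2 * (Δ ⬝ᵥ Δ) ≤ d ⬝ᵥ d := sq_mul_dotProduct_self_le hc.le hΔ
  calc ‖u‖ ^ 2 ≤ u ⬝ᵥ u := norm_sq_le_dotProduct_self u
    _ ≤ r ⬝ᵥ r / c ^ 2 := by rw [le_div_iff₀ (by positivity)]; linarith
    _ ≤ Fintype.card ι * (M * ‖Δ‖ ^ 2) ^ 2 / c ^ 2 := by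
        gcongr
        exact (dotProduct_self_le_card_mul_norm_sq r).trans (by gcongr)
    _ = Fintype.card ι * M ^ 2 * (‖Δ‖ ^ 2) ^ 2 / c ^ 2 := by ring
    _ ≤ Fintype.card ι * M ^ 2 * (d ⬝ᵥ d / c ^ 2) ^ 2 / c ^ 2 := by
        gcongr
        rw [le_div_iff₀ (by positivity)]
        nlinarith [norm_sq_le_dotProduct_self Δ]
    _ = Fintype.card ι * M ^ 2 * (d ⬝ᵥ d) ^ 2 / c ^ 6 := by field_simp

lemma norm_sub_inv_mulVec_sum_smul_sq_le {S : Type*} [Fintype S] {g : S → (ι → ℝ) → ι → ℝ}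
    {w : S → ℝ} {H : Matrix ι ι ℝ} {x y d : ι → ℝ} {c M R : ℝ} (hc : 0 < c)
    (hw : ∀ s, 0 ≤ w s) (hw1 : ∑ s, w s = 1) (hg : ∀ s, ContDiff ℝ 2 (g s))
    (hM : ∀ s z, ‖fderiv ℝ (fderiv ℝ (g s)) z‖ ≤ M)
    (hsymm : ∀ s a b, a ⬝ᵥ fderiv ℝ (g s) x b = b ⬝ᵥ fderiv ℝ (g s) x a)
    (hcoer : ∀ s, ∀ μ ∈ Metric.closedBall x R, ∀ v, c * (v ⬝ᵥ v) ≤ v ⬝ᵥ fderiv ℝ (g s) μ v)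
    (hy : ‖y - x‖ ≤ R)
    (hH : ∀ n m, H n m = ∑ s, w s * fderiv ℝ (fun l => g s l m) x (Pi.single n 1))
    (hdet : IsUnit H.det) (hd : ∑ s, w s • g s y - ∑ s, w s • g s x = d) :
    ‖y - x - H⁻¹ *ᵥ d‖ ^ 2 ≤ Fintype.card ι * M ^ 2 * (d ⬝ᵥ d) ^ 2 / c ^ 6 := by
  have hg' s : Differentiable ℝ (g s) := (hg s).differentiable two_ne_zero
  have hHF := mulVec_eq_fderiv_sum_smul hg' hsymm hH
  have hFcoer : ∀ μ ∈ Metric.closedBall x R, ∀ v,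
      c * (v ⬝ᵥ v) ≤ v ⬝ᵥ fderiv ℝ (fun x => ∑ s, w s • g s x) μ v := fun μ hμ v => by
    rw [dotProduct_fderiv_sum_smul hg']
    exact (convex_Ici _).sum_mem (z := fun s => v ⬝ᵥ fderiv ℝ (g s) μ v)
      (fun s _ => hw s) hw1 fun s _ => hcoer s μ hμ v
  have hx : x ∈ Metric.closedBall x R := Metric.mem_closedBall_self ((norm_nonneg _).trans hy)
  have hΔ : c * ((y - x) ⬝ᵥ (y - x)) ≤ (y - x) ⬝ᵥ d := hd ▸
    le_dotProduct_sub_of_le_fderiv (Differentiable.fun_sum fun s _ => (hg' s).const_smul (w s))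
      x y fun z hz => hFcoer z ((convex_closedBall x R).segment_subset hx
        (mem_closedBall_iff_norm.2 hy) hz) _
  have hr : ‖d - H *ᵥ (y - x)‖ ≤ M * ‖y - x‖ ^ 2 := by
    rw [← hd, hHF]
    exact norm_sum_smul_sub_sub_fderiv_le hw hw1 hg hM x y
  exact norm_sub_inv_mulVec_sq_le hc hdet (fun v => hHF v ▸ hFcoer x hx v) hΔ hr

end Perturbation

theorem stmt13_general (N : ℕ) (S : Type) [Fintype S] (f : S → ℝ) (V δ M : ℝ)
    (hδ : 0 < δ) (hV : 0 < V)
    (P : S → (Fin N → ℝ) → ℝ) (A : Fin N → ℝ)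
    (hP : ∀ s, ContDiff ℝ 2 (P s))
    (hSC : ∀ s (y z : Fin N → ℝ),
      δ * ∑ i, (z i) ^ 2 ≤ fderiv ℝ (fun w => fderiv ℝ (P s) w z) y z)
    (g : S → (Fin N → ℝ) → (Fin N → ℝ))
    (hmin : ∀ s (lam y : Fin N → ℝ),
      V * P s (g s lam) - ∑ n, lam n * (g s lam n - A n)
        ≤ V * P s y - ∑ n, lam n * (y n - A n))
    (hgC : ∀ s, ContDiff ℝ 2 (g s))
    (hgM : ∀ s l, ‖fderiv ℝ (fderiv ℝ (g s)) l‖ ≤ M)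
    (lam : Fin N → ℝ)
    (hslack : ∀ n, ∑ s, f s * g s lam n = A n) :
    ∃ K : ℝ, ∀ (fh : S → ℝ) (lamhat : Fin N → ℝ) (Hh : Matrix (Fin N) (Fin N) ℝ),
      (∀ s, 0 ≤ fh s) → (∑ s, fh s = 1) →
      (∀ n, ∑ s, fh s * g s lamhat n = A n) →
      (∀ n m, Hh n m = ∑ s, fh s * fderiv ℝ (fun l => g s l m) lam (Pi.single n 1)) →
      IsUnit Hh.det →
      ‖lamhat - lam - Hh⁻¹.mulVec (fun n => ∑ s, (f s - fh s) * g s lam n)‖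
        ≤ K * ∑ s, (f s - fh s) ^ 2 := by
  have hmin' s : MinimizesLagrangian V (P s) (g s) := minimizesLagrangian_of_le A (hmin s)
  have hg s : Differentiable ℝ (g s) := (hgC s).differentiable two_ne_zero
  have hconv s y z : δ * (z ⬝ᵥ z) ≤ fderiv ℝ (fderiv ℝ (P s)) y z z := by
    have hP' := ((hP s).fderiv_right (m := 1) le_rfl).differentiable one_ne_zero y
    simpa [fderiv_clm_apply hP' (differentiableAt_const z), dotProduct, sq] using hSC s y z
  obtain ⟨R, hR⟩ :=
    exists_norm_sub_le_of_minimizesLagrangian (fun s => (hP s).continuous) hmin' lam A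
  obtain ⟨c, hc, hcoer⟩ := exists_pos_forall_mul_dotProduct_self_le hV hδ hP hconv hmin' hg
    (isCompact_closedBall lam R)
  refine ⟨√N * |M| * (∑ n, ∑ s, g s lam n ^ 2) / c ^ 3,
    fun fh lamhat Hh hfh hfh1 heq hH hdet => ?_⟩
  set d := fun n => ∑ s, (f s - fh s) * g s lam n
  have hd : ∑ s, fh s • g s lamhat - ∑ s, fh s • g s lam = d := by
    ext n
    simp [d, sub_mul, sum_sub_distrib, heq, hslack]
  have key := norm_sub_inv_mulVec_sum_smul_sq_le hc hfh hfh1 hgC hgM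
    (fun s => (hmin' s).dotProduct_fderiv_comm (hP s) (hg s) lam) hcoer
    (hR fh lamhat hfh hfh1 (by ext n; simpa using heq n)) hH hdet hd
  have hd_sq := dotProduct_self_sum_mul_le (fun s => f s - fh s) (fun s n => g s lam n)
  rw [← sq_le_sq₀ (norm_nonneg _) (by positivity)]
  calc _ ≤ N * M ^ 2 * (d ⬝ᵥ d) ^ 2 / c ^ 6 := by simpa using key
    _ ≤ N * M ^ 2 * ((∑ s, (f s - fh s) ^ 2) * ∑ n, ∑ s, g s lam n ^ 2) ^ 2 / c ^ 6 := by
        gcongr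
        exact dotProduct_self_nonneg d
    _ = _ := by
        simp only [mul_pow, div_pow, Real.sq_sqrt (Nat.cast_nonneg N), sq_abs]
        ring

/-- Channel-state-distribution perturbation in Primal2: with minimizers `g s λ` of
`V P_s(y) - ∑ λ_n (y_n - A_n)` (each `P s` `δ`-strongly convex, twice continuously
differentiable; each `g s` twice continuously differentiable with bounded second
derivatives), slackness `∑_s f_s g_{n,s}(λ*) = A_n` and `∑_s f̂_s g_{n,s}(λ̂*) = A_n`,
`d_n := ∑_s (f_s - f̂_s) g_{n,s}(λ*)`, and invertible `Ĥ` with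
`ĥ_{n,m} = ∑_s f̂_s ∂g_{m,s}(λ*)/∂λ_n`, we have `λ̂* = λ* + Ĥ⁻¹ d + O(∑_s (f_s - f̂_s)²)`. -/
theorem stmt13 (N : ℕ) (S : Type) [Fintype S] (f : S → ℝ) (V δ M : ℝ)
    (hδ : 0 < δ) (hV : 0 < V)
    (hf : ∀ s, 0 ≤ f s) (hf1 : ∑ s, f s = 1)
    (P : S → (Fin N → ℝ) → ℝ) (A : Fin N → ℝ)
    (hP : ∀ s, ContDiff ℝ 2 (P s))
    (hSC : ∀ s (y z : Fin N → ℝ),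
      δ * ∑ i, (z i) ^ 2 ≤ fderiv ℝ (fun w => fderiv ℝ (P s) w z) y z)
    (g : S → (Fin N → ℝ) → (Fin N → ℝ))
    (hmin : ∀ s (lam y : Fin N → ℝ),
      V * P s (g s lam) - ∑ n, lam n * (g s lam n - A n)
        ≤ V * P s y - ∑ n, lam n * (y n - A n))
    (hgC : ∀ s, ContDiff ℝ 2 (g s))
    (hgM : ∀ s l, ‖fderiv ℝ (fderiv ℝ (g s)) l‖ ≤ M)
    (lam : Fin N → ℝ)
    (hslack : ∀ n, ∑ s, f s * g s lam n = A n) :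
    ∃ K : ℝ, ∀ (fh : S → ℝ) (lamhat : Fin N → ℝ) (Hh : Matrix (Fin N) (Fin N) ℝ),
      (∀ s, 0 ≤ fh s) → (∑ s, fh s = 1) →
      (∀ n, ∑ s, fh s * g s lamhat n = A n) →
      (∀ n m, Hh n m = ∑ s, fh s * fderiv ℝ (fun l => g s l m) lam (Pi.single n 1)) →
      IsUnit Hh.det →
      ‖lamhat - lam - Hh⁻¹.mulVec (fun n => ∑ s, (f s - fh s) * g s lam n)‖
        ≤ K * ∑ s, (f s - fh s) ^ 2 :=
  stmt13_general N S f V δ M hδ hV P A hP hSC g hmin hgC hgM lam hslack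
end
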